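/- arXiv:2109.10545 — 5 statements merged into one kernel-verified Lean document; each statement's English description precedes it below -/
import Mathlib

section
/- Let H₀ be a bounded self-adjoint operator on a complex Hilbert space 𝓗, F : 𝓗 →L[ℂ] 𝓚 a compact operator into a complex Hilbert space 𝓚, and λ ∈ ℝ. If λ is semi-regular for H₀ with respect to F (i.e., there exist a bounded self-adjoint operator J on 𝓚 and r ∈ ℝ such that the norm limit T_{λ+i0}(H₀ + r F* J F) exists), then the direction F*F is λ-regular for H₀, i.e., there exists r ∈ ℝ such that the norm limit T_{λ+i0}(H₀ + r F* F) exists. -/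
open ContinuousLinearMap Filter Complex Set Topology

variable {𝓗 𝓚 : Type*} [NormedAddCommGroup 𝓗] [InnerProductSpace ℂ 𝓗] [CompleteSpace 𝓗]
  [NormedAddCommGroup 𝓚] [InnerProductSpace ℂ 𝓚] [CompleteSpace 𝓚]

/-- `Tz F A z = F (A - z)⁻¹ F*`, using `Ring.inverse` (which is the genuine inverse when
`A - z•1` is invertible, as is the case for self-adjoint `A` and nonreal `z`). -/
noncomputable def Tz (F : 𝓗 →L[ℂ] 𝓚) (A : 𝓗 →L[ℂ] 𝓗) (z : ℂ) : 𝓚 →L[ℂ] 𝓚 :=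
  F ∘L (Ring.inverse (A - z • (1 : 𝓗 →L[ℂ] 𝓗))) ∘L (adjoint F)

/-- The norm limit `T_{λ+i0}(A)` exists: there is a bounded operator `T` on `𝓚` such that
`T_{λ+iy}(A) → T` in operator norm as `y → 0⁺`. -/
def NormLimitExists (F : 𝓗 →L[ℂ] 𝓚) (A : 𝓗 →L[ℂ] 𝓗) (lam : ℝ) : Prop :=
  ∃ T : 𝓚 →L[ℂ] 𝓚,
    Tendsto (fun y : ℝ => Tz F A ((lam : ℂ) + y * Complex.I)) (𝓝[>] 0) (𝓝 T)

/-!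
Write `H₁ = H₀ + r F*JF` and let `T` be the norm limit of `T_{λ+iy}(H₁)`. As a limit of the
compact operators `F (H₁ - z)⁻¹ F*` with `Im z > 0`, `T` is compact and `Im ⟪w, T w⟫ ≥ 0`.
For `K = s - rJ` we have `H₀ + s F*F = H₁ + F*KF`, and the second resolvent identity gives
`T_z(H₁ + F*KF) = (1 + T_z(H₁) K)⁻¹ T_z(H₁)`; so it suffices to find a real `s` with `1 + TK`
invertible. By the Fredholm alternative, if `1 + TK` is not invertible there is a unit vector
`u = -K T u`; then `⟪u, T u⟫` is real, so the nonnegative operator `Im T` kills `u` and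
`T* u = T u`. For distinct such `s` the vectors `T u` are mutually orthogonal, and for
`s ∈ (0, 1]` their norms are at least `1 / (1 + ‖rJ‖)`; compactness of `T` rules this out for
infinitely many `s`.
-/

open scoped InnerProductSpace ComplexStarModule

theorem IsSelfAdjoint.isUnit_sub_smul_one {A : Type*} [CStarAlgebra A] {a : A}
    (ha : IsSelfAdjoint a) {z : ℂ} (hz : z.im ≠ 0) : IsUnit (a - z • 1) := by
  have hz' : z ∉ spectrum ℂ a := fun h => hz (ha.im_eq_zero_of_mem_spectrum h)
  rwa [spectrum.notMem_iff, Algebra.algebraMap_eq_smul_one, ← neg_sub, IsUnit.neg_iff] at hz'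

theorem Ring.inverse_one_add_mul_mul_eq {R : Type*} [Ring R] {T₁ T₂ K : R}
    (h₁ : T₁ - T₂ = T₁ * K * T₂) (h₂ : T₁ - T₂ = T₂ * K * T₁) :
    Ring.inverse (1 + T₁ * K) * T₁ = T₂ := by
  have hright : (1 + T₁ * K) * (1 - T₂ * K) = 1 := by
    rw [show (1 + T₁ * K) * (1 - T₂ * K) = 1 + (T₁ - T₂ - T₁ * K * T₂) * K by noncomm_ring, h₁,
      sub_self, zero_mul, add_zero]
  have hleft : (1 - T₂ * K) * (1 + T₁ * K) = 1 := by
    rw [show (1 - T₂ * K) * (1 + T₁ * K) = 1 + (T₁ - T₂ - T₂ * K * T₁) * K by noncomm_ring, h₂,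
      sub_self, zero_mul, add_zero]
  rw [show 1 + T₁ * K = ((⟨_, _, hright, hleft⟩ : Rˣ) : R) from rfl, Ring.inverse_unit]
  change (1 - T₂ * K) * T₁ = T₂
  rw [sub_mul, one_mul, ← h₂, sub_sub_cancel]

theorem IsCompactOperator.isUnit_one_add_of_injective {𝕜 X : Type*} [NontriviallyNormedField 𝕜]
    [NormedAddCommGroup X] [NormedSpace 𝕜 X] [CompleteSpace X] {C : X →L[𝕜] X}
    (hC : IsCompactOperator C) (hinj : Function.Injective ⇑(1 + C)) : IsUnit (1 + C) := by
  have hμ : ¬ Module.End.HasEigenvalue (C : Module.End 𝕜 X) (-1) := by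
    intro h
    obtain ⟨x, hx⟩ := h.exists_hasEigenvector
    refine hx.2 (hinj ?_)
    rw [map_zero, add_apply, one_apply_eq_self, ← ContinuousLinearMap.coe_coe, hx.apply_eq_smul]
    simp
  have hres := (hC.hasEigenvalue_or_mem_resolventSet (neg_ne_zero.mpr one_ne_zero)).resolve_left hμ
  rw [resolventSet, Set.mem_ofPred, Algebra.algebraMap_eq_smul_one, neg_one_smul,
    ← neg_add'] at hres
  exact (IsUnit.neg_iff _).mp hres

theorem IsCompactOperator.exists_norm_apply_lt_of_pairwise_inner_eq_zero
    {𝕜 E F : Type*} [RCLike 𝕜] [NormedAddCommGroup E] [NormedSpace 𝕜 E]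
    [NormedAddCommGroup F] [InnerProductSpace 𝕜 F] {T : E →L[𝕜] F} (hT : IsCompactOperator T)
    {u : ℕ → E} (hu : ∀ n, ‖u n‖ ≤ 1) (horth : Pairwise fun m n => ⟪T (u m), T (u n)⟫_𝕜 = 0)
    {δ : ℝ} (hδ : 0 < δ) : ∃ n, ‖T (u n)‖ < δ := by
  by_contra! hlarge
  obtain ⟨K, hK, hTK⟩ := hT.image_closedBall_subset_compact 1
  obtain ⟨a, -, φ, hφ, hlim⟩ :=
    hK.tendsto_subseq fun n => hTK ⟨u n, by simpa using hu n, rfl⟩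
  obtain ⟨N, hN⟩ := Metric.cauchySeq_iff'.mp hlim.cauchySeq δ hδ
  have hclose : ‖T (u (φ (N + 1))) - T (u (φ N))‖ < δ := by
    simpa [dist_eq_norm] using hN (N + 1) N.le_succ
  have hpyth : ‖T (u (φ (N + 1))) - T (u (φ N))‖ ^ 2
      = ‖T (u (φ (N + 1)))‖ ^ 2 + ‖T (u (φ N))‖ ^ 2 := by
    rw [@norm_sub_sq 𝕜, horth (hφ.injective.ne N.succ_ne_self)]
    simp
  nlinarith [hlarge (φ (N + 1)), hlarge (φ N), norm_nonneg (T (u (φ (N + 1))) - T (u (φ N)))]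

section ComplexHilbert

variable {E : Type*} [NormedAddCommGroup E] [InnerProductSpace ℂ E] [CompleteSpace E]

namespace ContinuousLinearMap

theorem apply_eq_zero_of_nonneg_of_inner_apply_self_eq_zero {Q : E →L[ℂ] E} (hQ : 0 ≤ Q)
    {x : E} (hx : ⟪Q x, x⟫_ℂ = 0) : Q x = 0 := by
  obtain ⟨B, rfl⟩ := CStarAlgebra.nonneg_iff_eq_star_mul_self.mp hQ
  change ⟪adjoint B (B x), x⟫_ℂ = 0 at hx
  rw [adjoint_inner_left, inner_self_eq_zero] at hx
  change adjoint B (B x) = 0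
  rw [hx, map_zero]

theorem inner_imaginaryPart_apply_self (T : E →L[ℂ] E) (w : E) :
    ⟪(ℑ T : E →L[ℂ] E) w, w⟫_ℂ = (⟪w, T w⟫_ℂ).im := by
  simp only [imaginaryPart_apply_coe, star_eq_adjoint, smul_apply, sub_apply, inner_smul_left,
    inner_smul_left_eq_smul, inner_sub_left, adjoint_inner_left, ← inner_conj_symm (T w)]
  generalize ⟪w, T w⟫_ℂ = c
  apply Complex.ext <;> simp
  ring

theorem adjoint_apply_eq_of_im_inner_eq_zero {T : E →L[ℂ] E} (hT : ∀ w, 0 ≤ (⟪w, T w⟫_ℂ).im)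
    {u : E} (hu : (⟪u, T u⟫_ℂ).im = 0) : adjoint T u = T u := by
  have hQ : 0 ≤ (ℑ T : E →L[ℂ] E) := by
    rw [nonneg_iff_isPositive, isPositive_iff']
    refine ⟨(ℑ T).prop, fun w => ?_⟩
    rw [inner_imaginaryPart_apply_self]
    exact_mod_cast hT w
  have hQu := apply_eq_zero_of_nonneg_of_inner_apply_self_eq_zero hQ
    (by rw [inner_imaginaryPart_apply_self, hu, Complex.ofReal_zero])
  simp only [imaginaryPart_apply_coe, star_eq_adjoint, smul_apply, sub_apply] at hQu
  rw [neg_smul, neg_eq_zero, smul_eq_zero, smul_eq_zero, sub_eq_zero] at hQu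
  simpa [Complex.I_ne_zero, eq_comm] using hQu

end ContinuousLinearMap

variable {T : E →L[ℂ] E}

theorem exists_norm_eq_one_adjoint_apply_eq_of_not_isUnit (hT : IsCompactOperator T)
    (hTim : ∀ w, 0 ≤ (⟪w, T w⟫_ℂ).im) {K : E →L[ℂ] E} (hK : IsSelfAdjoint K)
    (hunit : ¬ IsUnit (1 + T * K)) :
    ∃ u : E, ‖u‖ = 1 ∧ adjoint T u = T u ∧ u + K (T u) = 0 := by
  obtain ⟨x, hx, hx0⟩ : ∃ x : E, x + T (K x) = 0 ∧ x ≠ 0 := by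
    by_contra! h
    refine hunit ((hT.comp_clm K).isUnit_one_add_of_injective ?_)
    rw [injective_iff_map_eq_zero]
    exact h
  have hTKx : T (K x) = -x := eq_neg_of_add_eq_zero_right hx
  have hKx : K x ≠ 0 := fun h => hx0 (by rw [← neg_eq_zero, ← hTKx, h, map_zero])
  have hadj : adjoint T (K x) = T (K x) := by
    refine adjoint_apply_eq_of_im_inner_eq_zero hTim ?_
    have hreal : (⟪K x, x⟫_ℂ).im = 0 := hK.isSymmetric.im_inner_apply_self x
    rw [hTKx, inner_neg_right, Complex.neg_im, hreal, neg_zero]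
  refine ⟨(‖K x‖⁻¹ : ℂ) • K x, norm_smul_inv_norm hKx, ?_, ?_⟩
  · rw [map_smul, map_smul, hadj]
  · rw [map_smul, map_smul, hTKx, map_neg, ← smul_add, add_neg_cancel, smul_zero]

theorem inner_apply_eq_zero_of_ne {L : E →L[ℂ] E} (hL : IsSelfAdjoint L) {s s' : ℝ}
    (hss' : s ≠ s') {u u' : E} (hu : adjoint T u = T u) (hsu : u + ((s : ℂ) • 1 + L) (T u) = 0)
    (hsu' : u' + ((s' : ℂ) • 1 + L) (T u') = 0) : ⟪T u, T u'⟫_ℂ = 0 := by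
  have e1 : ⟪u, T u'⟫_ℂ = ⟪T u, u'⟫_ℂ := by rw [← hu, adjoint_inner_left]
  have hLsym : ⟪L (T u), T u'⟫_ℂ = ⟪T u, L (T u')⟫_ℂ := hL.isSymmetric _ _
  have e2 : ⟪u, T u'⟫_ℂ = -(s * ⟪T u, T u'⟫_ℂ + ⟪T u, L (T u')⟫_ℂ) := by
    conv_lhs => rw [eq_neg_of_add_eq_zero_left hsu]
    rw [inner_neg_left, add_apply, smul_apply, one_apply_eq_self, inner_add_left, inner_smul_left,
      Complex.conj_ofReal, hLsym]
  have e3 : ⟪T u, u'⟫_ℂ = -(s' * ⟪T u, T u'⟫_ℂ + ⟪T u, L (T u')⟫_ℂ) := by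
    conv_lhs => rw [eq_neg_of_add_eq_zero_left hsu']
    rw [inner_neg_right, add_apply, smul_apply, one_apply_eq_self, inner_add_right,
      inner_smul_right]
  have hsub : ((s : ℂ) - s') * ⟪T u, T u'⟫_ℂ = 0 := by linear_combination e2 - e3 - e1
  exact (mul_eq_zero.mp hsub).resolve_left (sub_ne_zero.mpr (mod_cast hss'))

theorem exists_isUnit_one_add_mul_smul_one_add (hT : IsCompactOperator T)
    (hTim : ∀ w, 0 ≤ (⟪w, T w⟫_ℂ).im) {L : E →L[ℂ] E} (hL : IsSelfAdjoint L) :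
    ∃ s : ℝ, IsUnit (1 + T * ((s : ℂ) • 1 + L)) := by
  by_contra! hbad
  set s : ℕ → ℝ := fun n => ((n : ℝ) + 1)⁻¹
  have hs_inj : Function.Injective s := fun m n hmn => by
    simp only [s, inv_inj, add_left_inj, Nat.cast_inj] at hmn
    exact hmn
  choose u hu_norm hu_adj hu_eq using fun n =>
    exists_norm_eq_one_adjoint_apply_eq_of_not_isUnit hT hTim
      ((IsSelfAdjoint.smul (Complex.conj_ofReal _) (.one _)).add hL) (hbad (s n))
  have horth : Pairwise fun m n => ⟪T (u m), T (u n)⟫_ℂ = 0 := fun m n hmn =>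
    inner_apply_eq_zero_of_ne hL (hs_inj.ne hmn) (hu_adj m) (hu_eq m) (hu_eq n)
  obtain ⟨n, hn⟩ := hT.exists_norm_apply_lt_of_pairwise_inner_eq_zero (fun n => (hu_norm n).le)
    horth (δ := (1 + ‖L‖)⁻¹) (by positivity)
  have hs_le : s n ≤ 1 := inv_le_one_of_one_le₀ (by simp)
  have hbound : 1 ≤ (1 + ‖L‖) * ‖T (u n)‖ := calc
    1 = ‖((s n : ℂ) • 1 + L) (T (u n))‖ := by
      rw [← hu_norm n, ← norm_neg (((s n : ℂ) • 1 + L) (T (u n))),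
        ← eq_neg_of_add_eq_zero_left (hu_eq n)]
    _ ≤ s n * ‖T (u n)‖ + ‖L‖ * ‖T (u n)‖ := by
      rw [add_apply, smul_apply, one_apply_eq_self]
      refine norm_add_le_of_le ?_ (L.le_opNorm _)
      rw [norm_smul, Complex.norm_real, Real.norm_of_nonneg (by positivity)]
    _ ≤ (1 + ‖L‖) * ‖T (u n)‖ := by nlinarith [norm_nonneg (T (u n))]
  have := mul_lt_mul_of_pos_left hn (by positivity : 0 < 1 + ‖L‖)
  rw [mul_inv_cancel₀ (by positivity)] at this
  linarith

end ComplexHilbert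

section Tz

variable {A : 𝓗 →L[ℂ] 𝓗} {F : 𝓗 →L[ℂ] 𝓚} {K : 𝓚 →L[ℂ] 𝓚} {z : ℂ}

theorem im_inner_Tz_nonneg (hA : IsSelfAdjoint A) (hz : 0 < z.im) (u : 𝓚) :
    0 ≤ (⟪u, Tz F A z u⟫_ℂ).im := by
  set w := Ring.inverse (A - z • 1) (adjoint F u)
  have hw : A w - z • w = adjoint F u := by
    change ((A - z • 1) * Ring.inverse (A - z • 1)) (adjoint F u) = adjoint F u
    rw [Ring.mul_inverse_cancel _ (hA.isUnit_sub_smul_one hz.ne'), one_apply_eq_self]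
  have hinner : ⟪u, Tz F A z u⟫_ℂ = ⟪A w - z • w, w⟫_ℂ := by
    rw [hw]
    exact (adjoint_inner_left F w u).symm
  have hreal : (⟪A w, w⟫_ℂ).im = 0 := hA.isSymmetric.im_inner_apply_self w
  have hnorm : ⟪w, w⟫_ℂ = (‖w‖ ^ 2 : ℝ) := by simp [inner_self_eq_norm_sq_to_K]
  rw [hinner, inner_sub_left, inner_smul_left, hnorm, Complex.sub_im, hreal, Complex.mul_im,
    Complex.conj_im, Complex.ofReal_im, Complex.ofReal_re]
  nlinarith [sq_nonneg ‖w‖]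

theorem Tz_sub_Tz {B : 𝓗 →L[ℂ] 𝓗} (hA : IsUnit (A - z • 1)) (hB : IsUnit (B - z • 1))
    (hBA : B - A = adjoint F ∘L K ∘L F) : Tz F A z - Tz F B z = Tz F A z * K * Tz F B z := by
  have hres := Ring.inverse_sub_inverse (iff_of_true hA hB)
  rw [sub_sub_sub_cancel_right, hBA] at hres
  simp only [Tz, ← comp_sub, ← sub_comp, hres, mul_def, comp_assoc]

theorem Tz_add_adjoint_comp (hA : IsSelfAdjoint A) (hK : IsSelfAdjoint K) (hz : z.im ≠ 0) :
    Tz F (A + adjoint F ∘L K ∘L F) z = Ring.inverse (1 + Tz F A z * K) * Tz F A z := by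
  have hAz := hA.isUnit_sub_smul_one hz
  have hBz := (hA.add (hK.adjoint_conj F)).isUnit_sub_smul_one hz
  refine (Ring.inverse_one_add_mul_mul_eq (Tz_sub_Tz hAz hBz (add_sub_cancel_left _ _)) ?_).symm
  rw [← neg_sub, Tz_sub_Tz (K := -K) hBz hAz (by simp), mul_neg, neg_mul, neg_neg]

variable {lam : ℝ} {T : 𝓚 →L[ℂ] 𝓚}

theorem isCompactOperator_of_tendsto_Tz (hF : IsCompactOperator F)
    (hT : Tendsto (fun y : ℝ => Tz F A ((lam : ℂ) + y * Complex.I)) (𝓝[>] 0) (𝓝 T)) :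
    IsCompactOperator T :=
  isCompactOperator_of_tendsto hT (.of_forall fun _ => hF.comp_clm _)

theorem im_inner_nonneg_of_tendsto_Tz (hA : IsSelfAdjoint A)
    (hT : Tendsto (fun y : ℝ => Tz F A ((lam : ℂ) + y * Complex.I)) (𝓝[>] 0) (𝓝 T)) (w : 𝓚) :
    0 ≤ (⟪w, T w⟫_ℂ).im := by
  have hcont : Continuous fun S : 𝓚 →L[ℂ] 𝓚 => (⟪w, S w⟫_ℂ).im :=
    Complex.continuous_im.comp (continuous_const.inner (apply ℂ 𝓚 w).continuous)
  refine ge_of_tendsto ((hcont.tendsto T).comp hT) (eventually_nhdsWithin_of_forall fun y hy => ?_)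
  exact im_inner_Tz_nonneg hA (by simpa using hy) w

theorem normLimitExists_add_adjoint_comp (hA : IsSelfAdjoint A) (hK : IsSelfAdjoint K)
    (hT : Tendsto (fun y : ℝ => Tz F A ((lam : ℂ) + y * Complex.I)) (𝓝[>] 0) (𝓝 T))
    (hunit : IsUnit (1 + T * K)) : NormLimitExists F (A + adjoint F ∘L K ∘L F) lam := by
  have hinv : ContinuousAt Ring.inverse (1 + T * K) := NormedRing.inverse_continuousAt hunit.unit
  refine ⟨Ring.inverse (1 + T * K) * T, Tendsto.congr' ?_
    ((hinv.tendsto.comp (tendsto_const_nhds.add (hT.mul_const K))).mul hT)⟩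
  exact eventually_nhdsWithin_of_forall fun y (hy : 0 < y) =>
    (Tz_add_adjoint_comp hA hK (by simpa using hy.ne')).symm

end Tz

/-- If `λ` is semi-regular for `H₀` (some direction `F*JF` is `λ`-regular), then the
direction `F*F` is `λ`-regular. -/
theorem FstarF_regular_of_semiRegular
    (H₀ : 𝓗 →L[ℂ] 𝓗) (hH₀ : IsSelfAdjoint H₀)
    (F : 𝓗 →L[ℂ] 𝓚) (hF : IsCompactOperator F) (lam : ℝ)
    (hsemi : ∃ J : 𝓚 →L[ℂ] 𝓚, IsSelfAdjoint J ∧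
      ∃ r : ℝ, NormLimitExists F (H₀ + (r : ℂ) • ((adjoint F) ∘L J ∘L F)) lam) :
    ∃ r : ℝ, NormLimitExists F (H₀ + (r : ℂ) • ((adjoint F) ∘L F)) lam := by
  obtain ⟨J, hJ, r, T, hT⟩ := hsemi
  have hrJ : IsSelfAdjoint ((r : ℂ) • J) := IsSelfAdjoint.smul (Complex.conj_ofReal r) hJ
  have hH₁ : IsSelfAdjoint (H₀ + (r : ℂ) • ((adjoint F) ∘L J ∘L F)) := by
    simpa using hH₀.add (hrJ.adjoint_conj F)
  obtain ⟨s, hs⟩ := exists_isUnit_one_add_mul_smul_one_add (isCompactOperator_of_tendsto_Tz hF hT)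
    (im_inner_nonneg_of_tendsto_Tz hH₁ hT) hrJ.neg
  have hK : IsSelfAdjoint ((s : ℂ) • 1 + -((r : ℂ) • J)) :=
    (IsSelfAdjoint.smul (Complex.conj_ofReal s) (.one _)).add hrJ.neg
  have hshift : H₀ + (s : ℂ) • ((adjoint F) ∘L F) = H₀ + (r : ℂ) • ((adjoint F) ∘L J ∘L F)
      + adjoint F ∘L ((s : ℂ) • 1 + -((r : ℂ) • J)) ∘L F := by
    ext x
    simp only [add_apply, smul_apply, comp_apply, neg_apply, one_apply_eq_self, map_add, map_neg,
      map_smul]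
    abel
  exact ⟨s, hshift ▸ normLimitExists_add_adjoint_comp hH₁ hK hT hs⟩
end

section
/- Let H be a bounded self-adjoint operator on a complex Hilbert space 𝓗, F : 𝓗 →L[ℂ] 𝓚 a bounded operator into a complex Hilbert space 𝓚, A a bounded self-adjoint operator on 𝓚, and z ∈ ℂ with Im z ≠ 0. Then the operator 1 + T_z(H) A on 𝓚 is invertible and the second resolvent identity holds: T_z(H + F* A F) = (1 + T_z(H) A)⁻¹ · T_z(H). -/
open ContinuousLinearMap Filter Complex Set Topology

variable {𝓗 𝓚 : Type*} [NormedAddCommGroup 𝓗] [InnerProductSpace ℂ 𝓗] [CompleteSpace 𝓗]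
  [NormedAddCommGroup 𝓚] [InnerProductSpace ℂ 𝓚] [CompleteSpace 𝓚]

lemma isUnit_sub_smul_one_of_isSelfAdjoint {E : Type*} [NormedAddCommGroup E]
    [InnerProductSpace ℂ E] [CompleteSpace E] {B : E →L[ℂ] E} (hB : IsSelfAdjoint B)
    {z : ℂ} (hz : z.im ≠ 0) : IsUnit (B - z • (1 : E →L[ℂ] E)) := by
  have h : z ∉ spectrum ℂ B := fun h => hz (hB.im_eq_zero_of_mem_spectrum h)
  rw [spectrum.notMem_iff] at h
  have := h.neg
  rwa [neg_sub, Algebra.algebraMap_eq_smul_one] at this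

/-- Second resolvent identity: for nonreal `z`, the operator `1 + T_z(H) A` is invertible and
`T_z(H + F* A F) = (1 + T_z(H) A)⁻¹ T_z(H)`. -/
theorem second_resolvent_identity
    (H : 𝓗 →L[ℂ] 𝓗) (hH : IsSelfAdjoint H)
    (F : 𝓗 →L[ℂ] 𝓚)
    (A : 𝓚 →L[ℂ] 𝓚) (hA : IsSelfAdjoint A)
    (z : ℂ) (hz : z.im ≠ 0) :
    IsUnit (1 + Tz F H z * A) ∧
      Tz F (H + (adjoint F) ∘L A ∘L F) z =
        Ring.inverse (1 + Tz F H z * A) * Tz F H z := by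
  set G : 𝓗 →L[ℂ] 𝓗 := (adjoint F) ∘L A ∘L F with hGdef
  have hG : IsSelfAdjoint G := by
    rw [IsSelfAdjoint, hGdef, ← ContinuousLinearMap.comp_assoc,
      ContinuousLinearMap.star_eq_adjoint, adjoint_comp, adjoint_comp, adjoint_adjoint,
      ← ContinuousLinearMap.star_eq_adjoint A, hA.star_eq, ContinuousLinearMap.comp_assoc]
  set B : 𝓗 →L[ℂ] 𝓗 := H - z • 1 with hBdef
  set B' : 𝓗 →L[ℂ] 𝓗 := (H + G) - z • 1 with hB'def
  have hU : IsUnit B := isUnit_sub_smul_one_of_isSelfAdjoint hH hz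
  have hU' : IsUnit B' := isUnit_sub_smul_one_of_isSelfAdjoint (hH.add hG) hz
  set R : 𝓗 →L[ℂ] 𝓗 := Ring.inverse B with hRdef
  set R' : 𝓗 →L[ℂ] 𝓗 := Ring.inverse B' with hR'def
  have hBR : B * R = 1 := Ring.mul_inverse_cancel _ hU
  have hRB : R * B = 1 := Ring.inverse_mul_cancel _ hU
  have hB'R' : B' * R' = 1 := Ring.mul_inverse_cancel _ hU'
  have hR'B' : R' * B' = 1 := Ring.inverse_mul_cancel _ hU'
  have hdiff : B' - B = G := by rw [hBdef, hB'def]; abel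
  set Fs : 𝓚 →L[ℂ] 𝓗 := adjoint F with hFs
  set T : 𝓚 →L[ℂ] 𝓚 := Tz F H z with hTdef
  set T' : 𝓚 →L[ℂ] 𝓚 := Tz F (H + G) z with hT'def
  have hT : T = F ∘L R ∘L Fs := by
    simp only [hTdef, hRdef, hBdef, hFs, Tz]
  have hT' : T' = F ∘L R' ∘L Fs := by
    simp only [hT'def, hR'def, hB'def, hFs, Tz]
  have hres1 : R - R' = R * G * R' := by
    have h : R * (B' - B) * R' = R * (B' * R') - (R * B) * R' := by noncomm_ring
    rw [← hdiff, h, hB'R', hRB, mul_one, one_mul]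
  have hres2 : R - R' = R' * G * R := by
    have h : R' * (B' - B) * R = R' * B' * R - R' * (B * R) := by noncomm_ring
    rw [← hdiff, h, hBR, hR'B', mul_one, one_mul]
  have hsub : ∀ X Y : 𝓗 →L[ℂ] 𝓗, (F ∘L X ∘L Fs) - (F ∘L Y ∘L Fs) = F ∘L ((X - Y) ∘L Fs) := by
    intro X Y
    ext x
    simp
  have hTT'1 : T - T' = T * A * T' := by
    have key : (F ∘L R ∘L Fs) * A * (F ∘L R' ∘L Fs) = F ∘L ((R * G * R') ∘L Fs) := by
      simp only [hGdef, ContinuousLinearMap.mul_def, ContinuousLinearMap.comp_assoc]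
    rw [hT, hT', hsub, hres1]
    exact key.symm
  have hTT'2 : T - T' = T' * A * T := by
    have key : (F ∘L R' ∘L Fs) * A * (F ∘L R ∘L Fs) = F ∘L ((R' * G * R) ∘L Fs) := by
      simp only [hGdef, ContinuousLinearMap.mul_def, ContinuousLinearMap.comp_assoc]
    rw [hT, hT', hsub, hres2]
    exact key.symm
  have h1 : (1 + T * A) * (1 - T' * A) = 1 := by
    have h : (1 + T * A) * (1 - T' * A) = 1 + (T - T' - T * A * T') * A := by noncomm_ring
    rw [h, hTT'1]
    simp
  have h2 : (1 - T' * A) * (1 + T * A) = 1 := by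
    have h : (1 - T' * A) * (1 + T * A) = 1 + (T - T' - T' * A * T) * A := by noncomm_ring
    rw [h, hTT'2]
    simp
  have hUnit : IsUnit (1 + T * A) := ⟨⟨1 + T * A, 1 - T' * A, h1, h2⟩, rfl⟩
  refine ⟨hUnit, ?_⟩
  have hfin : (1 + T * A) * T' = T := by
    have h : (1 + T * A) * T' = T' + T * A * T' := by noncomm_ring
    rw [h, ← hTT'1]; abel
  have hc : Ring.inverse (1 + T * A) * ((1 + T * A) * T') = T' := by
    rw [← mul_assoc, Ring.inverse_mul_cancel _ hUnit, one_mul]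
  rw [hfin] at hc
  exact hc.symm
end

section
/- Let H be a bounded self-adjoint operator on a complex Hilbert space 𝓗, F : 𝓗 →L[ℂ] 𝓚 a compact operator into a complex Hilbert space 𝓚, A a bounded self-adjoint operator on 𝓚, and λ ∈ ℝ. Suppose the norm limit T_{λ+i0}(H) exists. Then the norm limit T_{λ+i0}(H + F* A F) exists if and only if the operator 1 + T_{λ+i0}(H) A is invertible; and in that case T_{λ+i0}(H + F* A F) = (1 + T_{λ+i0}(H) A)⁻¹ · T_{λ+i0}(H). -/
open ContinuousLinearMap Filter Complex Set Topology

variable {𝓗 𝓚 : Type*} [NormedAddCommGroup 𝓗] [InnerProductSpace ℂ 𝓗] [CompleteSpace 𝓗]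
  [NormedAddCommGroup 𝓚] [InnerProductSpace ℂ 𝓚] [CompleteSpace 𝓚]

/-- For a self-adjoint operator `B` and nonreal `z`, `B - z•1` is invertible. -/
lemma isUnit_sub_smul_one (B : 𝓗 →L[ℂ] 𝓗) (hB : IsSelfAdjoint B) {z : ℂ}
    (hz : z.im ≠ 0) : IsUnit (B - z • (1 : 𝓗 →L[ℂ] 𝓗)) := by
  have hmem : z ∉ spectrum ℂ B := by
    intro hmem
    have := hB.mem_spectrum_eq_re hmem
    apply hz
    rw [this, ofReal_im]
  rw [spectrum.notMem_iff] at hmem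
  have h : B - z • (1 : 𝓗 →L[ℂ] 𝓗) = -(algebraMap ℂ (𝓗 →L[ℂ] 𝓗) z - B) := by
    rw [Algebra.algebraMap_eq_smul_one]; abel
  rw [h]
  exact hmem.neg

/-- Purely algebraic: if `(1+TA)T' = T` and `T'(1+AT) = T` then `1+TA` is a unit
with inverse `1 - T'A`, and `(1+TA)⁻¹ T = T'`. -/
lemma units_of_identities {R : Type*} [Ring R] (T T' A : R)
    (h1 : (1 + T * A) * T' = T) (h2 : T' * (1 + A * T) = T) :
    IsUnit (1 + T * A) ∧ Ring.inverse (1 + T * A) * T = T' := by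
  have e1 : T * A * T' = T - T' := by
    rw [add_mul, one_mul] at h1
    exact eq_sub_of_add_eq' h1
  have e2 : T' * A * T = T - T' := by
    rw [mul_add, mul_one, ← mul_assoc] at h2
    exact eq_sub_of_add_eq' h2
  have p : (1 + T * A) * (1 - T' * A) = 1 := by
    have h : (1 + T * A) * (1 - T' * A) = 1 + T * A - T' * A - (T * A * T') * A := by
      noncomm_ring
    rw [h, e1]; noncomm_ring
  have q : (1 - T' * A) * (1 + T * A) = 1 := by
    have h : (1 - T' * A) * (1 + T * A) = 1 + T * A - T' * A - (T' * A * T) * A := by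
      noncomm_ring
    rw [h, e2]; noncomm_ring
  refine ⟨⟨⟨1 + T * A, 1 - T' * A, p, q⟩, rfl⟩, ?_⟩
  have hinv : Ring.inverse (1 + T * A) = 1 - T' * A :=
    Ring.inverse_unit ⟨1 + T * A, 1 - T' * A, p, q⟩
  have e2' : T' * (A * T) = T - T' := by rw [← mul_assoc]; exact e2
  rw [hinv, sub_mul, one_mul, mul_assoc, e2']; abel

/-- The key resolvent identities at a fixed nonreal `z`. -/
lemma key_identities (H : 𝓗 →L[ℂ] 𝓗) (hH : IsSelfAdjoint H) (F : 𝓗 →L[ℂ] 𝓚)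
    (A : 𝓚 →L[ℂ] 𝓚) (hA : IsSelfAdjoint A) {z : ℂ} (hz : z.im ≠ 0) :
    (1 + Tz F H z * A) * Tz F (H + (adjoint F) ∘L A ∘L F) z = Tz F H z ∧
      Tz F (H + (adjoint F) ∘L A ∘L F) z * (1 + A * Tz F H z) = Tz F H z := by
  set C : 𝓗 →L[ℂ] 𝓗 := (adjoint F) ∘L A ∘L F with hC
  have hCsa : IsSelfAdjoint C := by
    rw [IsSelfAdjoint, star_eq_adjoint, hC, ← comp_assoc, adjoint_comp, adjoint_comp,
      adjoint_adjoint, hA.adjoint_eq, comp_assoc]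
  have hu : IsUnit (H - z • (1 : 𝓗 →L[ℂ] 𝓗)) := isUnit_sub_smul_one H hH hz
  have hu' : IsUnit (H + C - z • (1 : 𝓗 →L[ℂ] 𝓗)) :=
    isUnit_sub_smul_one _ (hH.add hCsa) hz
  set R : 𝓗 →L[ℂ] 𝓗 := Ring.inverse (H - z • (1 : 𝓗 →L[ℂ] 𝓗)) with hR
  set R' : 𝓗 →L[ℂ] 𝓗 := Ring.inverse (H + C - z • (1 : 𝓗 →L[ℂ] 𝓗)) with hR'
  have r1 : (H - z • (1 : 𝓗 →L[ℂ] 𝓗)) * R = 1 := Ring.mul_inverse_cancel _ hu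
  have r2 : R * (H - z • (1 : 𝓗 →L[ℂ] 𝓗)) = 1 := Ring.inverse_mul_cancel _ hu
  have r1' : (H + C - z • (1 : 𝓗 →L[ℂ] 𝓗)) * R' = 1 := Ring.mul_inverse_cancel _ hu'
  have r2' : R' * (H + C - z • (1 : 𝓗 →L[ℂ] 𝓗)) = 1 := Ring.inverse_mul_cancel _ hu'
  have hsplit : H + C - z • (1 : 𝓗 →L[ℂ] 𝓗) = (H - z • (1 : 𝓗 →L[ℂ] 𝓗)) + C := by abel
  have key1 : R' + R * C * R' = R := by
    have h : 1 + R * C = R * (H + C - z • (1 : 𝓗 →L[ℂ] 𝓗)) := by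
      rw [hsplit, mul_add, r2]
    have h2 : (1 + R * C) * R' = R := by rw [h, mul_assoc, r1', mul_one]
    rw [add_mul, one_mul] at h2
    exact h2
  have key2 : R' + R' * C * R = R := by
    have h : 1 + C * R = (H + C - z • (1 : 𝓗 →L[ℂ] 𝓗)) * R := by
      rw [hsplit, add_mul, r1]
    have h2 : R' * (1 + C * R) = R := by rw [h, ← mul_assoc, r2', one_mul]
    rw [mul_add, mul_one, ← mul_assoc] at h2
    exact h2
  have mulconj : ∀ X Y : 𝓗 →L[ℂ] 𝓗,
      (F ∘L X ∘L adjoint F) * A * (F ∘L Y ∘L adjoint F)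
        = F ∘L (X * C * Y) ∘L adjoint F := by
    intro X Y
    ext x
    simp [mul_apply, hC]
  have addconj : ∀ X Y : 𝓗 →L[ℂ] 𝓗,
      F ∘L X ∘L adjoint F + F ∘L Y ∘L adjoint F = F ∘L (X + Y) ∘L adjoint F := by
    intro X Y
    ext x
    simp
  have hTz : Tz F H z = F ∘L R ∘L adjoint F := rfl
  have hTz' : Tz F (H + C) z = F ∘L R' ∘L adjoint F := rfl
  constructor
  · rw [hTz, hTz', add_mul, one_mul, mulconj, addconj, key1]
  · rw [hTz, hTz', mul_add, mul_one, ← mul_assoc, mulconj, addconj, key2]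

/-- Suppose the norm limit `T₀ = T_{λ+i0}(H)` exists. Then the norm limit
`T_{λ+i0}(H + F* A F)` exists if and only if `1 + T₀ A` is invertible, in which case
it equals `(1 + T₀ A)⁻¹ T₀`. -/
theorem normLimit_perturbed_iff_isUnit
    (H : 𝓗 →L[ℂ] 𝓗) (hH : IsSelfAdjoint H)
    (F : 𝓗 →L[ℂ] 𝓚) (hF : IsCompactOperator F)
    (A : 𝓚 →L[ℂ] 𝓚) (hA : IsSelfAdjoint A) (lam : ℝ)
    (T₀ : 𝓚 →L[ℂ] 𝓚)
    (hT₀ : Tendsto (fun y : ℝ => Tz F H ((lam : ℂ) + y * Complex.I)) (𝓝[>] 0) (𝓝 T₀)) :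
    ((∃ T : 𝓚 →L[ℂ] 𝓚,
        Tendsto (fun y : ℝ => Tz F (H + (adjoint F) ∘L A ∘L F) ((lam : ℂ) + y * Complex.I))
          (𝓝[>] 0) (𝓝 T)) ↔ IsUnit (1 + T₀ * A)) ∧
      (IsUnit (1 + T₀ * A) →
        Tendsto (fun y : ℝ => Tz F (H + (adjoint F) ∘L A ∘L F) ((lam : ℂ) + y * Complex.I))
          (𝓝[>] 0) (𝓝 (Ring.inverse (1 + T₀ * A) * T₀))) := by
  set H' : 𝓗 →L[ℂ] 𝓗 := H + (adjoint F) ∘L A ∘L F with hH'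
  have him : ∀ y : ℝ, y ∈ Ioi (0 : ℝ) → ((lam : ℂ) + y * Complex.I).im ≠ 0 := by
    intro y hy
    simp only [Complex.add_im, Complex.ofReal_im, Complex.mul_im, Complex.ofReal_re,
      Complex.I_im, Complex.I_re, mul_zero, mul_one, zero_add]
    simpa using ne_of_gt hy
  have hkey : ∀ y ∈ Ioi (0 : ℝ),
      (1 + Tz F H ((lam : ℂ) + y * Complex.I) * A) * Tz F H' ((lam : ℂ) + y * Complex.I)
          = Tz F H ((lam : ℂ) + y * Complex.I) ∧
        Tz F H' ((lam : ℂ) + y * Complex.I)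
            * (1 + A * Tz F H ((lam : ℂ) + y * Complex.I))
          = Tz F H ((lam : ℂ) + y * Complex.I) :=
    fun y hy => key_identities H hH F A hA (him y hy)
  -- the crucial per-`z` formula, and the part 2 tendsto
  have hpt : ∀ y ∈ Ioi (0 : ℝ),
      Tz F H' ((lam : ℂ) + y * Complex.I)
        = Ring.inverse (1 + Tz F H ((lam : ℂ) + y * Complex.I) * A)
            * Tz F H ((lam : ℂ) + y * Complex.I) := by
    intro y hy
    exact ((units_of_identities _ _ _ (hkey y hy).1 (hkey y hy).2).2).symm
  have hev : ∀ᶠ (y : ℝ) in 𝓝[>] (0 : ℝ),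
      Tz F H' ((lam : ℂ) + y * Complex.I)
        = Ring.inverse (1 + Tz F H ((lam : ℂ) + y * Complex.I) * A)
            * Tz F H ((lam : ℂ) + y * Complex.I) :=
    eventually_nhdsWithin_of_forall hpt
  have hpart2 : IsUnit (1 + T₀ * A) →
      Tendsto (fun y : ℝ => Tz F H' ((lam : ℂ) + y * Complex.I)) (𝓝[>] 0)
        (𝓝 (Ring.inverse (1 + T₀ * A) * T₀)) := by
    intro hU
    have h1 : Tendsto (fun y : ℝ => 1 + Tz F H ((lam : ℂ) + y * Complex.I) * A)
        (𝓝[>] 0) (𝓝 (1 + T₀ * A)) :=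
      tendsto_const_nhds.add (hT₀.mul tendsto_const_nhds)
    have h2 : Tendsto (fun y : ℝ =>
        Ring.inverse (1 + Tz F H ((lam : ℂ) + y * Complex.I) * A))
        (𝓝[>] 0) (𝓝 (Ring.inverse (1 + T₀ * A))) := by
      have hc : ContinuousAt (Ring.inverse : (𝓚 →L[ℂ] 𝓚) → 𝓚 →L[ℂ] 𝓚) (1 + T₀ * A) := by
        have := NormedRing.inverse_continuousAt hU.unit
        rwa [IsUnit.unit_spec] at this
      exact hc.tendsto.comp h1
    exact Tendsto.congr' (Filter.EventuallyEq.symm hev) (h2.mul hT₀)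
  constructor
  · constructor
    · rintro ⟨T, hT⟩
      -- pass the identities to the limit
      have lim1 : Tendsto (fun y : ℝ =>
          (1 + Tz F H ((lam : ℂ) + y * Complex.I) * A)
            * Tz F H' ((lam : ℂ) + y * Complex.I)) (𝓝[>] 0) (𝓝 ((1 + T₀ * A) * T)) :=
        (tendsto_const_nhds.add (hT₀.mul tendsto_const_nhds)).mul hT
      have lim2 : Tendsto (fun y : ℝ =>
          Tz F H' ((lam : ℂ) + y * Complex.I)
            * (1 + A * Tz F H ((lam : ℂ) + y * Complex.I))) (𝓝[>] 0)
          (𝓝 (T * (1 + A * T₀))) :=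
        hT.mul (tendsto_const_nhds.add (tendsto_const_nhds.mul hT₀))
      have lim1' : Tendsto (fun y : ℝ =>
          (1 + Tz F H ((lam : ℂ) + y * Complex.I) * A)
            * Tz F H' ((lam : ℂ) + y * Complex.I)) (𝓝[>] 0) (𝓝 T₀) :=
        Tendsto.congr'
          (eventually_nhdsWithin_of_forall fun y hy => ((hkey y hy).1).symm) hT₀
      have lim2' : Tendsto (fun y : ℝ =>
          Tz F H' ((lam : ℂ) + y * Complex.I)
            * (1 + A * Tz F H ((lam : ℂ) + y * Complex.I))) (𝓝[>] 0) (𝓝 T₀) :=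
        Tendsto.congr'
          (eventually_nhdsWithin_of_forall fun y hy => ((hkey y hy).2).symm) hT₀
      have eq1 : (1 + T₀ * A) * T = T₀ := tendsto_nhds_unique lim1 lim1'
      have eq2 : T * (1 + A * T₀) = T₀ := tendsto_nhds_unique lim2 lim2'
      exact (units_of_identities T₀ T A eq1 eq2).1
    · intro hU
      exact ⟨_, hpart2 hU⟩
  · exact hpart2
end

section
/- Let 𝓚 be a complex Hilbert space, T : 𝓚 →L[ℂ] 𝓚 a compact operator whose imaginary part ℑT := (2i)⁻¹(T - T*) is a positive operator, J : 𝓚 →L[ℂ] 𝓚 a bounded self-adjoint operator, and r ∈ ℝ. Then there exists s ∈ ℝ with s > ‖J‖ such that the operator 1 + r · T · (s·1 - J) on 𝓚 is invertible. -/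
/-!
For every real `s` at which `1 + r T (s - J)` fails to be invertible, the Fredholm alternative for
the compact operator `r T (s - J)` gives `ψₛ ≠ 0` with `r T uₛ = -ψₛ`, where `uₛ = (s - J) ψₛ`.
As `⟪uₛ, ψₛ⟫ = -r ⟪uₛ, T uₛ⟫` is real and `r ≠ 0`, the form `⟪uₛ, T uₛ⟫` is real, so the positive
operator `ℑT` annihilates `uₛ`, i.e. `T* uₛ = T uₛ`. This makes `ψₛ` and `ψₛ'` orthogonal for
`s ≠ s'`. All `ψₛ` lie in the range of `T`, which is separable, so only countably many `s` are bad
and some `s > ‖J‖` is good.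
-/

open ContinuousLinearMap Complex
open scoped InnerProductSpace

theorem IsCompactOperator.isSeparable_range {𝕜 E F : Type*} [NontriviallyNormedField 𝕜]
    [SeminormedAddCommGroup E] [NormedSpace 𝕜 E] [NormedAddCommGroup F] [NormedSpace 𝕜 F]
    {T : E →L[𝕜] F} (hT : IsCompactOperator T) :
    TopologicalSpace.IsSeparable (Set.range T) := by
  rw [← Set.image_univ, ← Metric.iUnion_closedBall_nat 0, Set.image_iUnion]
  refine .iUnion fun n => ?_
  obtain ⟨K, hK, hTK⟩ := hT.image_closedBall_subset_compact (n : ℝ)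
  exact hK.isSeparable.mono hTK

theorem TopologicalSpace.IsSeparable.countable_of_le_dist {X ι : Type*} [PseudoMetricSpace X]
    {S : Set X} (hS : IsSeparable S) {f : ι → X} (hfS : ∀ i, f i ∈ S) {ε : ℝ} (hε : 0 < ε)
    (hf : Pairwise fun i j => ε ≤ dist (f i) (f j)) : Countable ι := by
  have := hS.separableSpace
  refine Pairwise.countable_of_isOpen_disjoint
    (s := fun i => Metric.ball (⟨f i, hfS i⟩ : S) (ε / 2))
    (fun i j hij => Metric.ball_disjoint_ball ?_) (fun _ => Metric.isOpen_ball)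
    (fun _ => ⟨_, Metric.mem_ball_self (half_pos hε)⟩)
  simpa [Subtype.dist_eq] using hf hij

theorem TopologicalSpace.IsSeparable.countable_of_pairwise_inner_eq_zero {𝕜 E ι : Type*}
    [RCLike 𝕜] [NormedAddCommGroup E] [InnerProductSpace 𝕜 E] {S : Submodule 𝕜 E}
    (hS : IsSeparable (S : Set E)) {v : ι → E} (hvS : ∀ i, v i ∈ S) (hv0 : ∀ i, v i ≠ 0)
    (hv : Pairwise fun i j => ⟪v i, v j⟫_𝕜 = 0) : Countable ι := by
  set w : ι → E := fun i => ((‖v i‖⁻¹ : ℝ) : 𝕜) • v i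
  have hw : ∀ i, ‖w i‖ = 1 := fun i => by
    simp [w, norm_smul, inv_mul_cancel₀ (norm_ne_zero_iff.2 (hv0 i))]
  refine hS.countable_of_le_dist (f := w) (fun i => S.smul_mem _ (hvS i)) one_pos
    fun i j hij => ?_
  have hsq : dist (w i) (w j) ^ 2 = 2 := by
    rw [dist_eq_norm, @norm_sub_sq 𝕜, hw, hw]
    simp [w, inner_smul_left, inner_smul_right, hv hij]
    norm_num
  nlinarith [dist_nonneg (x := w i) (y := w j)]

theorem IsCompactOperator.exists_apply_eq_neg_of_not_isUnit_one_add {𝕜 X : Type*}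
    [NontriviallyNormedField 𝕜] [NormedAddCommGroup X] [NormedSpace 𝕜 X] [CompleteSpace X]
    {K : X →L[𝕜] X} (hK : IsCompactOperator K) (h : ¬ IsUnit (1 + K)) :
    ∃ x, x ≠ 0 ∧ K x = -x := by
  have hres : (-1 : 𝕜) ∉ resolventSet 𝕜 K := by
    rwa [spectrum.mem_resolventSet_iff, map_neg, map_one, ← IsUnit.neg_iff, neg_sub,
      sub_neg_eq_add, add_comm]
  obtain ⟨x, hx⟩ := ((hK.hasEigenvalue_or_mem_resolventSet (neg_ne_zero.2 one_ne_zero)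
    ).resolve_right hres).exists_hasEigenvector
  exact ⟨x, hx.2, by simpa using hx.apply_eq_smul⟩

theorem ContinuousLinearMap.IsPositive.apply_eq_zero_of_inner_eq_zero {E : Type*}
    [NormedAddCommGroup E] [InnerProductSpace ℂ E] [CompleteSpace E] {A : E →L[ℂ] E}
    (hA : A.IsPositive) {x : E} (hx : ⟪A x, x⟫_ℂ = 0) : A x = 0 := by
  obtain ⟨B, rfl⟩ := CStarAlgebra.nonneg_iff_eq_star_mul_self.1 ((nonneg_iff_isPositive A).2 hA)
  have hBx : B x = 0 := by
    rwa [star_eq_adjoint, mul_apply_eq_comp, adjoint_inner_left, inner_self_eq_zero] at hx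
  simp [hBx]

variable {𝓚 : Type*} [NormedAddCommGroup 𝓚] [InnerProductSpace ℂ 𝓚] [CompleteSpace 𝓚]

theorem adjoint_apply_eq_apply_of_im_inner_eq_zero {T : 𝓚 →L[ℂ] 𝓚}
    (hIm : (((2 : ℂ) * Complex.I)⁻¹ • (T - adjoint T)).IsPositive) {u : 𝓚}
    (hu : (⟪u, T u⟫_ℂ).im = 0) : adjoint T u = T u := by
  have hreal : ⟪T u, u⟫_ℂ = ⟪u, T u⟫_ℂ := by
    rw [← inner_conj_symm, Complex.conj_eq_iff_im.2 hu]
  have h := hIm.apply_eq_zero_of_inner_eq_zero (x := u) (by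
    rw [smul_apply, inner_smul_left, sub_apply, inner_sub_left, adjoint_inner_left, hreal,
      sub_self, mul_zero])
  rw [smul_apply, smul_eq_zero, sub_apply, sub_eq_zero] at h
  exact (h.resolve_left (by simp)).symm

section Eigenvectors

variable {T J : 𝓚 →L[ℂ] 𝓚} {r s s' : ℝ} {ψ ψ' : 𝓚}

theorem im_inner_apply_eq_zero_of_smul_apply_eq_neg (hJ : IsSelfAdjoint J) (hψ0 : ψ ≠ 0)
    (hψ : (r : ℂ) • T (((s : ℂ) • 1 - J) ψ) = -ψ) :
    (⟪((s : ℂ) • 1 - J) ψ, T (((s : ℂ) • 1 - J) ψ)⟫_ℂ).im = 0 := by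
  set u := ((s : ℂ) • 1 - J) ψ
  have hr : r ≠ 0 := by
    rintro rfl
    exact hψ0 (by simpa using hψ.symm)
  have hB : IsSelfAdjoint ((s : ℂ) • 1 - J) :=
    (IsSelfAdjoint.smul (Complex.conj_ofReal s) (.one _)).sub hJ
  have hreal : (⟪u, ψ⟫_ℂ).im = 0 := hB.isSymmetric.im_inner_apply_self ψ
  have hu : ⟪u, ψ⟫_ℂ = -(r * ⟪u, T u⟫_ℂ) := by
    rw [← inner_smul_right, hψ, inner_neg_right, neg_neg]
  rw [hu, neg_im, neg_eq_zero, im_ofReal_mul] at hreal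
  exact (mul_eq_zero.1 hreal).resolve_left hr

theorem inner_eq_zero_of_smul_apply_eq_neg_of_ne (hJ : IsSelfAdjoint J)
    (hTu : adjoint T (((s : ℂ) • 1 - J) ψ) = T (((s : ℂ) • 1 - J) ψ))
    (hψ : (r : ℂ) • T (((s : ℂ) • 1 - J) ψ) = -ψ)
    (hψ' : (r : ℂ) • T (((s' : ℂ) • 1 - J) ψ') = -ψ') (hss : s ≠ s') :
    ⟪ψ, ψ'⟫_ℂ = 0 := by
  set u := ((s : ℂ) • 1 - J) ψ with hu
  set u' := ((s' : ℂ) • 1 - J) ψ' with hu'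
  have h₁ : ⟪u, ψ'⟫_ℂ = -(r * ⟪T u, u'⟫_ℂ) := by
    rw [← neg_eq_iff_eq_neg.2 hψ', inner_neg_right, inner_smul_right, ← adjoint_inner_left, hTu]
  have h₂ : ⟪ψ, u'⟫_ℂ = -(r * ⟪T u, u'⟫_ℂ) := by
    rw [← neg_eq_iff_eq_neg.2 hψ, inner_neg_left, inner_smul_left, conj_ofReal]
  have h₃ : ⟪u, ψ'⟫_ℂ - ⟪ψ, u'⟫_ℂ = (s - s' : ℂ) * ⟪ψ, ψ'⟫_ℂ := by
    have hJψ : ⟪J ψ, ψ'⟫_ℂ = ⟪ψ, J ψ'⟫_ℂ := hJ.isSymmetric ψ ψ'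
    simp only [hu, hu', sub_apply, smul_apply, one_apply_eq_self, inner_sub_left,
      inner_sub_right, inner_smul_left, inner_smul_right, conj_ofReal, hJψ]
    ring
  rw [h₁, h₂, sub_self, eq_comm, mul_eq_zero] at h₃
  exact h₃.resolve_left (sub_ne_zero.2 (ofReal_injective.ne hss))

end Eigenvectors

theorem countable_setOf_not_isUnit_one_add_smul {T J : 𝓚 →L[ℂ] 𝓚} (hT : IsCompactOperator T)
    (hIm : (((2 : ℂ) * Complex.I)⁻¹ • (T - adjoint T)).IsPositive) (hJ : IsSelfAdjoint J)
    (r : ℝ) :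
    {s : ℝ | ¬ IsUnit (1 + (r : ℂ) • (T * ((s : ℂ) • (1 : 𝓚 →L[ℂ] 𝓚) - J)))}.Countable := by
  have heigen : ∀ s : ℝ, ¬ IsUnit (1 + (r : ℂ) • (T * ((s : ℂ) • (1 : 𝓚 →L[ℂ] 𝓚) - J))) →
      ∃ ψ, ψ ≠ 0 ∧ (r : ℂ) • T (((s : ℂ) • 1 - J) ψ) = -ψ := fun s hs =>
    ((hT.comp_clm _).smul (r : ℂ)).exists_apply_eq_neg_of_not_isUnit_one_add hs
  choose! ψ hψ0 hψ using heigen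
  have hTu : ∀ s : ℝ, ¬ IsUnit (1 + (r : ℂ) • (T * ((s : ℂ) • (1 : 𝓚 →L[ℂ] 𝓚) - J))) →
      adjoint T (((s : ℂ) • 1 - J) (ψ s)) = T (((s : ℂ) • 1 - J) (ψ s)) := fun s hs =>
    adjoint_apply_eq_apply_of_im_inner_eq_zero hIm
      (im_inner_apply_eq_zero_of_smul_apply_eq_neg hJ (hψ0 s hs) (hψ s hs))
  have hsep : TopologicalSpace.IsSeparable ((LinearMap.range (T : 𝓚 →ₗ[ℂ] 𝓚)) : Set 𝓚) := by
    rw [LinearMap.coe_range, coe_coe]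
    exact hT.isSeparable_range
  rw [← Set.countable_coe_iff]
  refine hsep.countable_of_pairwise_inner_eq_zero (v := fun s => ψ s.1)
    (fun s => ⟨-((r : ℂ) • ((s.1 : ℂ) • 1 - J) (ψ s.1)), ?_⟩) (fun s => hψ0 s.1 s.2)
    fun s s' hss => inner_eq_zero_of_smul_apply_eq_neg_of_ne hJ (hTu s.1 s.2) (hψ s.1 s.2)
      (hψ s'.1 s'.2) (Subtype.coe_injective.ne hss)
  rw [coe_coe, map_neg, map_smul, hψ s.1 s.2, neg_neg]

/-- For a compact operator `T` with positive imaginary part, a self-adjoint `J` and `r ∈ ℝ`,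
there is some `s > ‖J‖` for which `1 + r T (s - J)` is invertible. -/
theorem exists_isUnit_one_add_smul
    (T : 𝓚 →L[ℂ] 𝓚) (hT : IsCompactOperator T)
    (hIm : (((2 : ℂ) * Complex.I)⁻¹ • (T - adjoint T)).IsPositive)
    (J : 𝓚 →L[ℂ] 𝓚) (hJ : IsSelfAdjoint J) (r : ℝ) :
    ∃ s : ℝ, ‖J‖ < s ∧
      IsUnit (1 + (r : ℂ) • (T * ((s : ℂ) • (1 : 𝓚 →L[ℂ] 𝓚) - J))) := by
  obtain ⟨s, hs, hJs⟩ := ((countable_setOf_not_isUnit_one_add_smul hT hIm hJ r).dense_compl ℝ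
    ).exists_mem_open isOpen_Ioi Set.nonempty_Ioi
  exact ⟨s, hJs, not_not.1 hs⟩
end

section
/- Let 𝓚 be a complex Hilbert space, T : 𝓚 →L[ℂ] 𝓚 a bounded operator whose imaginary part ℑT := (2i)⁻¹(T - T*) is a positive operator, B : 𝓚 →L[ℂ] 𝓚 a bounded self-adjoint operator, r ∈ ℝ with r ≠ 0, and ψ ∈ 𝓚 such that r · B T B ψ = -ψ. Then (ℑT)(Bψ) = 0 and r · B (ℜT) B ψ = -ψ, where ℜT := (T + T*)/2. -/
/-!
Since `B` is self-adjoint, `⟪Bψ, T Bψ⟫ = ⟪ψ, BTBψ⟫`, and as `ψ = -r BTBψ` this equals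
`-r ‖BTBψ‖²`, a real number. Its imaginary part `⟪Bψ, (ℑT) Bψ⟫` therefore vanishes, and for a
positive operator `P = p²` the identity `⟪x, P x⟫ = ‖p x‖²` turns this into `(ℑT) Bψ = 0`.
Then `T Bψ = (ℜT) Bψ`, which gives the second claim.
-/

open ContinuousLinearMap Complex

variable {𝓚 : Type*} [NormedAddCommGroup 𝓚] [InnerProductSpace ℂ 𝓚] [CompleteSpace 𝓚]

open scoped ComplexStarModule InnerProductSpace

section StarModule

variable {A : Type*} [AddCommGroup A] [Module ℂ A] [StarAddMonoid A] [StarModule ℂ A]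

theorem realPart_apply_coe_eq_smul_add_star (a : A) :
    (ℜ a : A) = (2 : ℂ)⁻¹ • (a + star a) := by
  rw [realPart_apply_coe, ← Complex.coe_smul]
  norm_num

theorem imaginaryPart_apply_coe_eq_smul_sub_star (a : A) :
    (ℑ a : A) = ((2 : ℂ) * I)⁻¹ • (a - star a) := by
  rw [imaginaryPart_apply_coe, ← Complex.coe_smul, smul_smul]
  congr 1
  field_simp
  norm_num

end StarModule

namespace ContinuousLinearMap

variable {E : Type*} [NormedAddCommGroup E] [InnerProductSpace ℂ E] [CompleteSpace E]

theorem IsPositive.apply_eq_zero_of_re_inner_self_apply_eq_zero {P : E →L[ℂ] E}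
    (hP : P.IsPositive) {x : E} (hx : (⟪x, P x⟫_ℂ).re = 0) : P x = 0 := by
  obtain ⟨p, hp, -, rfl⟩ :=
    CFC.exists_sqrt_of_isSelfAdjoint_of_quasispectrumRestricts hP.isSelfAdjoint
      hP.spectrumRestricts
  have hpx : p x = 0 := by
    rw [mul_apply_eq_comp, ← adjoint_inner_left, hp.adjoint_eq] at hx
    simpa [inner_self_eq_norm_sq_to_K, ← ofReal_pow] using hx
  rw [mul_apply_eq_comp, hpx, map_zero]

theorem im_inner_self_apply_eq_re_inner_imaginaryPart (T : E →L[ℂ] E) (x : E) :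
    (⟪x, T x⟫_ℂ).im = (⟪x, (ℑ T : E →L[ℂ] E) x⟫_ℂ).re := by
  have h_re : (⟪x, (ℜ T : E →L[ℂ] E) x⟫_ℂ).im = 0 := (ℜ T).2.isSymmetric.im_inner_self_apply x
  conv_lhs => rw [← realPart_add_I_smul_imaginaryPart T]
  simp [h_re]

end ContinuousLinearMap

theorem imaginary_part_vanishes_on_eigenvector_general
    (T : 𝓚 →L[ℂ] 𝓚)
    (hIm : (((2 : ℂ) * Complex.I)⁻¹ • (T - adjoint T)).IsPositive)
    (B : 𝓚 →L[ℂ] 𝓚) (hB : IsSelfAdjoint B)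
    (r : ℝ) (ψ : 𝓚)
    (hψ : (r : ℂ) • ((B ∘L T ∘L B) ψ) = -ψ) :
    (((2 : ℂ) * Complex.I)⁻¹ • (T - adjoint T)) (B ψ) = 0 ∧
      (r : ℂ) • ((B ∘L ((2 : ℂ)⁻¹ • (T + adjoint T)) ∘L B) ψ) = -ψ := by
  rw [← star_eq_adjoint, ← imaginaryPart_apply_coe_eq_smul_sub_star] at hIm
  rw [← star_eq_adjoint, ← imaginaryPart_apply_coe_eq_smul_sub_star,
    ← realPart_apply_coe_eq_smul_add_star]
  have h_sym : ⟪B ψ, T (B ψ)⟫_ℂ = ⟪ψ, (B ∘L T ∘L B) ψ⟫_ℂ := by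
    rw [← adjoint_inner_right, hB.adjoint_eq, comp_apply, comp_apply]
  have h_real : (⟪B ψ, T (B ψ)⟫_ℂ).im = 0 := by
    rw [h_sym, ← inner_neg_neg, ← hψ, inner_smul_left, inner_neg_right]
    simp [inner_self_eq_norm_sq_to_K, ← ofReal_pow]
  have h_ker : (ℑ T : 𝓚 →L[ℂ] 𝓚) (B ψ) = 0 :=
    hIm.apply_eq_zero_of_re_inner_self_apply_eq_zero
      (by rwa [← im_inner_self_apply_eq_re_inner_imaginaryPart])
  refine ⟨h_ker, ?_⟩
  rw [← hψ]
  conv_rhs => rw [← realPart_add_I_smul_imaginaryPart T]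
  simp [h_ker]

/-- If `T` has positive imaginary part, `B` is self-adjoint, `r ≠ 0` and `r B T B ψ = -ψ`,
then `(ℑT)(Bψ) = 0` and `r B (ℜT) B ψ = -ψ`. -/
theorem imaginary_part_vanishes_on_eigenvector
    (T : 𝓚 →L[ℂ] 𝓚)
    (hIm : (((2 : ℂ) * Complex.I)⁻¹ • (T - adjoint T)).IsPositive)
    (B : 𝓚 →L[ℂ] 𝓚) (hB : IsSelfAdjoint B)
    (r : ℝ) (hr : r ≠ 0) (ψ : 𝓚)
    (hψ : (r : ℂ) • ((B ∘L T ∘L B) ψ) = -ψ) :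
    (((2 : ℂ) * Complex.I)⁻¹ • (T - adjoint T)) (B ψ) = 0 ∧
      (r : ℂ) • ((B ∘L ((2 : ℂ)⁻¹ • (T + adjoint T)) ∘L B) ψ) = -ψ :=
  imaginary_part_vanishes_on_eigenvector_general T hIm B hB r ψ hψ
end
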